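/- Let C be a Grothendieck category and L ⊆ L′ localizing subcategories with L stable. If L′/L is stable (under essential extensions) in C/L, then L′ is stable in C. -/

import Mathlib

/-!
Let `f : X ⟶ Y` be an essential monomorphism with `X ∈ L′`, and let `T : C ⥤ C/L` be the quotient
functor with section functor `S`. Because `L` is stable, `T f` is again essential, so stability of
`L′/L` gives `T Y ≅ T X₀` for some `X₀ ∈ L′`. The unit `Z ⟶ S (T Z)` has kernel and cokernel in
`L ⊆ L′`, so `Y ∈ L′ ↔ S (T Y) ∈ L′`, and `S (T Y) ≅ S (T X₀) ∈ L′` since `X₀ ∈ L′`.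
-/

open CategoryTheory Limits

universe w v u u₂ u₃ u₄ u₅

namespace CentralSheaf

variable {C : Type u} [Category.{v} C] [Abelian C]

/-- A monomorphism is essential if every morphism whose precomposition with it
is a monomorphism is itself a monomorphism. -/
def IsEssentialMono {X Y : C} (f : X ⟶ Y) : Prop :=
  Mono f ∧ ∀ ⦃Z : C⦄ (g : Y ⟶ Z), Mono (f ≫ g) → Mono g

/-- A Serre subcategory of an abelian category, given as a predicate on objects:
it contains the zero objects and is closed under isomorphisms, subobjects,
quotient objects and extensions. -/
structure IsSerre (P : C → Prop) : Prop where
  zero : ∀ X : C, IsZero X → P X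
  iso : ∀ {X Y : C}, (X ≅ Y) → P X → P Y
  sub : ∀ {X Y : C} (f : X ⟶ Y), Mono f → P Y → P X
  quot : ∀ {X Y : C} (f : X ⟶ Y), Epi f → P X → P Y
  ext : ∀ S : ShortComplex C, S.ShortExact → P S.X₁ → P S.X₃ → P S.X₂

/-- A localizing subcategory: a Serre subcategory closed under arbitrary direct sums. -/
structure IsLocalizing (P : C → Prop) extends IsSerre P : Prop where
  sums : ∀ {ι : Type v} (X : ι → C) (c : Cofan X), IsColimit c → (∀ i, P (X i)) → P c.pt

/-- Stability: closure under essential extensions. -/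
def IsStable (P : C → Prop) : Prop :=
  ∀ {X Y : C} (f : X ⟶ Y), IsEssentialMono f → P X → P Y

/-- A stable localizing subcategory. -/
structure IsStableLocalizing (P : C → Prop) extends IsLocalizing P : Prop where
  stable : IsStable P

/-- Data exhibiting `D` as the Gabriel quotient `C/P` of `C` by the localizing
subcategory `P`: an exact quotient functor `T` with fully faithful right adjoint
(section functor) `S`, whose kernel is exactly `P`. -/
structure QuotientData (P : C → Prop) (D : Type u₂) [Category.{v} D] [Abelian D] where
  T : C ⥤ D
  S : D ⥤ C
  adj : T ⊣ S
  additive : T.Additive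
  preservesFiniteLimits : PreservesFiniteLimits T
  fullS : S.Full
  faithfulS : S.Faithful
  ker : ∀ X : C, P X ↔ IsZero (T.obj X)

/-- `t` is the `P`-torsion subobject of its ambient object: it lies in `P` and
contains every subobject lying in `P`. -/
def IsTorsionSubobject (P : C → Prop) {X : C} (t : Subobject X) : Prop :=
  P ((t : C)) ∧ ∀ s : Subobject X, P ((s : C)) → s ≤ t

/-- `P₃` is the smallest localizing subcategory containing `P₁` and `P₂`. -/
def IsJoin (P₁ P₂ P₃ : C → Prop) : Prop :=
  IsLocalizing P₃ ∧ (∀ X, P₁ X → P₃ X) ∧ (∀ X, P₂ X → P₃ X) ∧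
    ∀ Q : C → Prop, IsLocalizing Q → (∀ X, P₁ X → Q X) → (∀ X, P₂ X → Q X) →
      ∀ X, P₃ X → Q X

/-- An object is noetherian if its subobjects satisfy the ascending chain condition. -/
def IsNoetherianObject (X : C) : Prop := WellFoundedGT (Subobject X)

/-- A Grothendieck category is locally noetherian if it has a (separating) set of
noetherian generators. -/
def IsLocallyNoetherian (C : Type u) [Category.{v} C] [Abelian C] : Prop :=
  ∃ 𝒢 : Set C, ObjectProperty.IsSeparating (fun X => X ∈ 𝒢) ∧ ∀ G ∈ 𝒢, IsNoetherianObject G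

lemma IsEssentialMono.of_isZero_pullback {X Y : C} {f : X ⟶ Y} (hf : Mono f)
    (h : ∀ ⦃K : C⦄ (m : K ⟶ Y), Mono m → IsZero (pullback f m) → IsZero K) :
    IsEssentialMono f := by
  refine ⟨hf, fun Z g hg => Preadditive.mono_of_isZero_kernel _ (h (kernel.ι g) inferInstance ?_)⟩
  have hfst : pullback.fst f (kernel.ι g) = 0 := by
    rw [← cancel_mono (f ≫ g), zero_comp, reassoc_of% pullback.condition, kernel.condition,
      comp_zero]
  exact IsZero.of_mono_eq_zero _ hfst

/-- The square induces a monomorphism `X ≅ cokernel t ⟶ cokernel m`, so `f ≫ cokernel.π m` is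
mono; essentiality of `f` then makes `cokernel.π m` mono, i.e. `m = 0`. -/
lemma IsEssentialMono.isZero_of_isPullback {X₁ X Y K : C} {t : X₁ ⟶ X} {l : X₁ ⟶ K} {f : X ⟶ Y}
    {m : K ⟶ Y} (hf : IsEssentialMono f) (sq : IsPullback t l f m) [Mono m] (hX₁ : IsZero X₁) :
    IsZero K := by
  have := Abelian.mono_cokernel_map_of_isPullback sq
  have := cokernel.π_of_zero (hX₁.eq_of_src t 0)
  have : Mono (f ≫ cokernel.π m) := by
    rw [← cokernel.π_desc t (f ≫ cokernel.π m) (by simp [reassoc_of% sq.w])]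
    exact mono_comp _ _
  have := hf.2 _ this
  exact IsZero.of_mono_eq_zero m (zero_of_comp_mono (cokernel.π m) (cokernel.condition m))

lemma IsEssentialMono.isPullback_snd {P X Y W : C} {fst : P ⟶ X} {snd : P ⟶ W} {f : X ⟶ Y}
    {g : W ⟶ Y} (hf : IsEssentialMono f) (sq : IsPullback fst snd f g) [Mono g] :
    IsEssentialMono snd := by
  refine IsEssentialMono.of_isZero_pullback (sq.mono_snd_of_mono hf.1) fun K m _ hK => ?_
  exact hf.isZero_of_isPullback ((IsPullback.of_hasPullback snd m).paste_horiz sq) hK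

lemma IsSerre.mem_iff_of_mem_kernel_of_mem_cokernel {P : C → Prop} (hP : IsSerre P) {A B : C}
    (u : A ⟶ B) (hker : P (kernel u)) (hcoker : P (cokernel u)) : P A ↔ P B := by
  have hcoim : P (Abelian.coimage u) ↔ P (Abelian.image u) :=
    ⟨hP.iso (Abelian.coimageIsoImage u), hP.iso (Abelian.coimageIsoImage u).symm⟩
  constructor
  · intro hA
    exact hP.ext (ShortComplex.mk (Abelian.image.ι u) (cokernel.π u) (kernel.condition _))
      { exact := ShortComplex.exact_of_f_is_kernel _ (kernelIsKernel _) }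
      (hcoim.1 (hP.quot (Abelian.coimage.π u) inferInstance hA)) hcoker
  · intro hB
    exact hP.ext (ShortComplex.mk (kernel.ι u) (Abelian.coimage.π u) (cokernel.condition _))
      { exact := ShortComplex.exact_of_g_is_cokernel _ (cokernelIsCokernel _) } hker
      (hcoim.2 (hP.sub (Abelian.image.ι u) inferInstance hB))

namespace QuotientData

variable {P : C → Prop} {D : Type u₂} [Category.{v} D] [Abelian D] (Q : QuotientData P D)

lemma mem_kernel_iff_mono_map {X Y : C} (h : X ⟶ Y) : P (kernel h) ↔ Mono (Q.T.map h) := by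
  have := Q.preservesFiniteLimits
  rw [Q.ker, Preadditive.mono_iff_isZero_kernel]
  exact (PreservesKernel.iso Q.T h).isZero_iff

lemma mem_cokernel_iff_epi_map {X Y : C} (h : X ⟶ Y) : P (cokernel h) ↔ Epi (Q.T.map h) := by
  have : PreservesColimits Q.T := Q.adj.leftAdjoint_preservesColimits
  rw [Q.ker, Preadditive.epi_iff_isZero_cokernel]
  exact (PreservesCokernel.iso Q.T h).isZero_iff

lemma mem_iff_mem_S_obj_T_obj {P' : C → Prop} (hP' : IsSerre P') (hle : ∀ X, P X → P' X)
    (X : C) : P' X ↔ P' (Q.S.obj (Q.T.obj X)) := by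
  have := Q.fullS
  have := Q.faithfulS
  exact hP'.mem_iff_of_mem_kernel_of_mem_cokernel (Q.adj.unit.app X)
    (hle _ ((Q.mem_kernel_iff_mono_map _).2 inferInstance))
    (hle _ ((Q.mem_cokernel_iff_epi_map _).2 inferInstance))

/-- A test map `g : T Y ⟶ Z` is `T` of its transpose `h : Y ⟶ S Z` up to the counit. The part of
`kernel h` meeting `X` is killed by `T`, hence lies in `P`; stability of `P` puts all of
`kernel h` in `P`, so `T h`, and with it `g`, is mono. -/
lemma isEssentialMono_map (hP : IsStable P) {X Y : C} {f : X ⟶ Y} (hf : IsEssentialMono f) :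
    IsEssentialMono (Q.T.map f) := by
  have := Q.preservesFiniteLimits
  have := Q.fullS
  have := Q.faithfulS
  have := hf.1
  refine ⟨inferInstance, fun Z g hg => ?_⟩
  let h : Y ⟶ Q.S.obj Z := Q.adj.homEquiv _ _ g
  have hg_eq : g = Q.T.map h ≫ Q.adj.counit.app Z := by
    simp [h, Adjunction.homEquiv_unit]
  have : Mono (Q.T.map (f ≫ h)) := by
    rw [hg_eq, ← Category.assoc, ← Functor.map_comp] at hg
    exact mono_of_mono _ (Q.adj.counit.app Z)
  have hmeet : P (pullback f (kernel.ι h)) := by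
    have hfst : Q.T.map (pullback.fst f (kernel.ι h)) = 0 := by
      rw [← cancel_mono (Q.T.map (f ≫ h)), zero_comp, ← Functor.map_comp,
        reassoc_of% pullback.condition, kernel.condition, comp_zero, Functor.map_zero]
    exact (Q.ker _).2 (IsZero.of_mono_eq_zero _ hfst)
  have : Mono (Q.T.map h) := (Q.mem_kernel_iff_mono_map _).1 <|
    hP _ (hf.isPullback_snd (IsPullback.of_hasPullback f (kernel.ι h))) hmeet
  rw [hg_eq]
  infer_instance

end QuotientData

theorem stable_of_quotient_stable_general
    {D : Type u₂} [Category.{v} D] [Abelian D]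
    (P P' : C → Prop) (hP : IsStableLocalizing P) (hP' : IsLocalizing P')
    (hle : ∀ X, P X → P' X) (Q : QuotientData P D)
    (P'' : D → Prop)
    (hP'' : ∀ Y : D, P'' Y ↔ ∃ X : C, P' X ∧ Nonempty (Q.T.obj X ≅ Y))
    (hst : IsStable P'') :
    IsStable P' := by
  intro X Y f hf hX
  have hTY : P'' (Q.T.obj Y) :=
    hst _ (Q.isEssentialMono_map hP.stable hf) ((hP'' _).2 ⟨X, hX, ⟨Iso.refl _⟩⟩)
  obtain ⟨X₀, hX₀, ⟨e⟩⟩ := (hP'' _).1 hTY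
  have hST := Q.mem_iff_mem_S_obj_T_obj hP'.toIsSerre hle
  exact (hST Y).2 (hP'.iso (Q.S.mapIso e) ((hST X₀).1 hX₀))

/-- Let `L ⊆ L′` be localizing subcategories of a Grothendieck
category `C` with `L` stable. If the image `L′/L` of `L′` in `C/L` is stable,
then `L′` is stable in `C`. -/
theorem stable_of_quotient_stable
    [HasColimits C] [AB5 C] (hsep : ∃ G : C, IsSeparator G)
    {D : Type u₂} [Category.{v} D] [Abelian D]
    (P P' : C → Prop) (hP : IsStableLocalizing P) (hP' : IsLocalizing P')
    (hle : ∀ X, P X → P' X) (Q : QuotientData P D)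
    (P'' : D → Prop)
    (hP'' : ∀ Y : D, P'' Y ↔ ∃ X : C, P' X ∧ Nonempty (Q.T.obj X ≅ Y))
    (hst : IsStable P'') :
    IsStable P' :=
  stable_of_quotient_stable_general P P' hP hP' hle Q P'' hP'' hst

end CentralSheaf
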